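/- Let σ satisfy the hypotheses above with τ of order q. Then the quotient B_n(σ)/A_n(σ) is isomorphic to the symmetric group S_n, via the map sending σ_s mod A_n(σ) to the transposition (s, s+1). -/

import Mathlib

/-!
Cut `ℕ` into the blocks `[i * d, i * d + d)`. Each `σ_s` maps blocks onto blocks, exchanging
blocks `s - 1` and `s`, and acts on every block by an element of the abelian group `⟨ς₁, τ⟩`:
a block moved from position `i` to position `j` is acted on by `ς₁ ^ (j - i) * τ ^ z`. These
permutations form a group on which reading off the permutation of the first `n` blocks is a
homomorphism to `Sₙ`. Its kernel consists of the permutations acting on every block by a power of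
`τ`, which is `⟨τ⟩⁽ⁿ⁾`. Restricted to `Bₙ(σ)` it has kernel `Bₙ(σ) ∩ ⟨τ⟩⁽ⁿ⁾ = Aₙ(σ)`, and it is
onto because it hits every adjacent transposition.
-/

/-- The shift of a permutation of `ℕ` up by `d`: fixes `{0,…,d-1}` and acts as `σ`
conjugated by `k ↦ k + d` above. -/
def shift (d : ℕ) (σ : Equiv.Perm ℕ) : Equiv.Perm ℕ where
  toFun k := if k < d then k else σ (k - d) + d
  invFun k := if k < d then k else σ⁻¹ (k - d) + d
  left_inv k := by
    by_cases h : k < d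
    · simp [h]
    · dsimp only
      rw [if_neg h, if_neg (by omega), Nat.add_sub_cancel, Equiv.Perm.inv_def, Equiv.symm_apply_apply]
      omega
  right_inv k := by
    by_cases h : k < d
    · simp [h]
    · dsimp only
      rw [if_neg h, if_neg (by omega), Nat.add_sub_cancel, Equiv.Perm.inv_def, Equiv.apply_symm_apply]
      omega

/-- The involution of `ℕ` swapping the blocks `{0,…,d-1}` and `{d,…,2d-1}`. -/
def theta (d : ℕ) : Equiv.Perm ℕ :=
  Function.Involutive.toPerm
    (fun k => if k < d then k + d else if k < 2 * d then k - d else k)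
    (by intro k; dsimp only; split_ifs <;> omega)

open Equiv Equiv.Perm

lemma Equiv.Perm.mem_fixingSubgroup_Ici {d : ℕ} {a : Perm ℕ} :
    a ∈ fixingSubgroup (Perm ℕ) (Set.Ici d) ↔ ∀ k, d ≤ k → a k = k := by
  simp [mem_fixingSubgroup_iff, Perm.smul_def]

lemma Equiv.Perm.apply_lt_of_mem_fixingSubgroup_Ici {d k : ℕ} {a : Perm ℕ}
    (ha : a ∈ fixingSubgroup (Perm ℕ) (Set.Ici d)) (hk : k < d) : a k < d := by
  by_contra! hak
  exact absurd (a.injective (mem_fixingSubgroup_Ici.mp ha _ hak)) (by omega)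

lemma Nat.mul_add_self_le_mul_of_lt {i j : ℕ} (d : ℕ) (h : i < j) : i * d + d ≤ j * d := by
  simpa [Nat.succ_mul] using Nat.mul_le_mul_right d (Nat.succ_le_of_lt h)

lemma Nat.eq_of_mul_add_eq_mul_add {d i j x y : ℕ} (hx : x < d) (hy : y < d)
    (h : i * d + x = j * d + y) : i = j := by
  rcases lt_trichotomy i j with hij | rfl | hij
  · have := Nat.mul_add_self_le_mul_of_lt d hij; omega
  · rfl
  · have := Nat.mul_add_self_le_mul_of_lt d hij; omega

section Shift

lemma shift_apply_of_lt (d : ℕ) (a : Perm ℕ) {k : ℕ} (h : k < d) : shift d a k = k :=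
  if_pos h

lemma shift_apply_add (d : ℕ) (a : Perm ℕ) (k : ℕ) : shift d a (d + k) = d + a k := by
  simp [shift, Nat.add_comm]

lemma shift_apply_eq_self {e m x : ℕ} {a : Perm ℕ}
    (ha : a ∈ fixingSubgroup (Perm ℕ) (Set.Ici m)) (hx : x < e ∨ e + m ≤ x) :
    shift e a x = x := by
  rcases hx with hx | hx
  · exact shift_apply_of_lt e a hx
  · obtain ⟨k, rfl⟩ := Nat.exists_eq_add_of_le (le_of_add_le_left hx)
    rw [shift_apply_add, mem_fixingSubgroup_Ici.mp ha k (by omega)]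

def shiftHom (d : ℕ) : Perm ℕ →* Perm ℕ :=
  MonoidHom.mk' (shift d) fun a b => by
    ext k
    rcases lt_or_ge k d with hk | hk
    · simp [shift_apply_of_lt d _ hk]
    · obtain ⟨k, rfl⟩ := Nat.exists_eq_add_of_le hk
      simp [shift_apply_add]

lemma shift_zpow (d : ℕ) (a : Perm ℕ) (m : ℤ) : shift d (a ^ m) = shift d a ^ m :=
  map_zpow (shiftHom d) a m

end Shift

section Blocks

variable {d n : ℕ} {ς₁ τ : Perm ℕ}

/-- The twist `ς₁ ^ (w i - i)` is what makes `σ` qualify: it carries block `0` to block `1`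
through `ς₁`, and block `1` back through `ς₂ = ς₁⁻¹ * τ`. -/
def PermutesBlocks (d n : ℕ) (ς₁ τ : Perm ℕ) (g : Perm ℕ) (w : Perm (Fin n)) : Prop :=
  (∀ k, n * d ≤ k → g k = k) ∧
  ∃ z : Fin n → ℤ, ∀ (i : Fin n) (k : ℕ), k < d →
    g (i * d + k) = w i * d + (ς₁ ^ ((w i : ℤ) - i) * τ ^ z i) k

lemma Commute.zpow_mul_zpow_apply_zpow_mul_zpow_apply (hc : Commute ς₁ τ) (a b e f : ℤ) (k : ℕ) :
    (ς₁ ^ a * τ ^ b) ((ς₁ ^ e * τ ^ f) k) = (ς₁ ^ (a + e) * τ ^ (b + f)) k := by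
  rw [← Perm.mul_apply, (hc.zpow_zpow e b).symm.mul_mul_mul_comm, zpow_add, zpow_add]

lemma zpow_mul_zpow_apply_lt (h₁ : ς₁ ∈ fixingSubgroup (Perm ℕ) (Set.Ici d))
    (hτ : τ ∈ fixingSubgroup (Perm ℕ) (Set.Ici d)) (a b : ℤ) {k : ℕ} (hk : k < d) :
    (ς₁ ^ a * τ ^ b) k < d :=
  apply_lt_of_mem_fixingSubgroup_Ici (mul_mem (zpow_mem h₁ a) (zpow_mem hτ b)) hk

namespace PermutesBlocks

variable (h₁ : ς₁ ∈ fixingSubgroup (Perm ℕ) (Set.Ici d))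
  (hτ : τ ∈ fixingSubgroup (Perm ℕ) (Set.Ici d))

lemma one : PermutesBlocks d n ς₁ τ 1 1 :=
  ⟨fun _ _ => rfl, fun _ => 0, fun i k _ => by simp⟩

include h₁ hτ in
lemma mul (hc : Commute ς₁ τ) {g g' : Perm ℕ} {w w' : Perm (Fin n)}
    (hg : PermutesBlocks d n ς₁ τ g w) (hg' : PermutesBlocks d n ς₁ τ g' w') :
    PermutesBlocks d n ς₁ τ (g * g') (w * w') := by
  obtain ⟨hfix, z, hz⟩ := hg
  obtain ⟨hfix', z', hz'⟩ := hg'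
  refine ⟨fun k hk => by rw [Perm.mul_apply, hfix' k hk, hfix k hk],
    fun i => z (w' i) + z' i, fun i k hk => ?_⟩
  rw [Perm.mul_apply, hz' i k hk, hz (w' i) _ (zpow_mul_zpow_apply_lt h₁ hτ _ _ hk),
    hc.zpow_mul_zpow_apply_zpow_mul_zpow_apply, Perm.mul_apply w]
  ring_nf

include h₁ hτ in
lemma inv (hc : Commute ς₁ τ) {g : Perm ℕ} {w : Perm (Fin n)}
    (hg : PermutesBlocks d n ς₁ τ g w) : PermutesBlocks d n ς₁ τ g⁻¹ w⁻¹ := by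
  obtain ⟨hfix, z, hz⟩ := hg
  refine ⟨fun k hk => by rw [Perm.inv_eq_iff_eq, hfix k hk], fun j => -z (w⁻¹ j),
    fun j k hk => ?_⟩
  rw [Perm.inv_eq_iff_eq, hz _ _ (zpow_mul_zpow_apply_lt h₁ hτ _ _ hk),
    hc.zpow_mul_zpow_apply_zpow_mul_zpow_apply]
  simp

include h₁ hτ in
lemma unique (hd : 0 < d) {g : Perm ℕ} {w w' : Perm (Fin n)}
    (hg : PermutesBlocks d n ς₁ τ g w) (hg' : PermutesBlocks d n ς₁ τ g w') : w = w' := by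
  obtain ⟨_, z, hz⟩ := hg
  obtain ⟨_, z', hz'⟩ := hg'
  ext i
  exact Nat.eq_of_mul_add_eq_mul_add (zpow_mul_zpow_apply_lt h₁ hτ _ _ hd)
    (zpow_mul_zpow_apply_lt h₁ hτ _ _ hd) ((hz i 0 hd).symm.trans (hz' i 0 hd))

end PermutesBlocks

end Blocks

section BlockPermHom

variable {d : ℕ} {ς₁ τ : Perm ℕ}

def blockSubgroup (n : ℕ) (hc : Commute ς₁ τ) (h₁ : ς₁ ∈ fixingSubgroup (Perm ℕ) (Set.Ici d))
    (hτ : τ ∈ fixingSubgroup (Perm ℕ) (Set.Ici d)) : Subgroup (Perm ℕ) where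
  carrier := {g | ∃ w, PermutesBlocks d n ς₁ τ g w}
  one_mem' := ⟨1, .one⟩
  mul_mem' := fun ⟨_, hg⟩ ⟨_, hg'⟩ => ⟨_, hg.mul h₁ hτ hc hg'⟩
  inv_mem' := fun ⟨_, hg⟩ => ⟨_, hg.inv h₁ hτ hc⟩

variable {n : ℕ} {hc : Commute ς₁ τ} {h₁ : ς₁ ∈ fixingSubgroup (Perm ℕ) (Set.Ici d)}
  {hτ : τ ∈ fixingSubgroup (Perm ℕ) (Set.Ici d)}

noncomputable def blockPermHom (hd : 0 < d) : blockSubgroup n hc h₁ hτ →* Perm (Fin n) where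
  toFun g := g.2.choose
  map_one' := (PermutesBlocks.one.unique h₁ hτ hd (1 : blockSubgroup n hc h₁ hτ).2.choose_spec).symm
  map_mul' g g' :=
    (g * g').2.choose_spec.unique h₁ hτ hd (g.2.choose_spec.mul h₁ hτ hc g'.2.choose_spec)

lemma blockPermHom_eq (hd : 0 < d) {g : blockSubgroup n hc h₁ hτ} {w : Perm (Fin n)}
    (hg : PermutesBlocks d n ς₁ τ g w) : blockPermHom hd g = w :=
  g.2.choose_spec.unique h₁ hτ hd hg

lemma blockPermHom_eq_one_iff (hd : 0 < d) (g : blockSubgroup n hc h₁ hτ) :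
    blockPermHom hd g = 1 ↔ PermutesBlocks d n ς₁ τ g 1 :=
  ⟨fun h => h ▸ g.2.choose_spec, blockPermHom_eq hd⟩

end BlockPermHom

section BlockDiag

variable {d : ℕ} {τ : Perm ℕ}

/-- The paper's `⟨τ⟩⁽ⁿ⁾`. -/
def blockDiagSubgroup (d n : ℕ) (τ : Perm ℕ) : Subgroup (Perm ℕ) :=
  Subgroup.closure {x | ∃ k < n, x ∈ Subgroup.zpowers (shift (k * d) τ)}

def blockDiag (d : ℕ) (τ : Perm ℕ) (c : ℕ → ℤ) (m : ℕ) : Perm ℕ :=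
  ((List.range m).map fun j => shift (j * d) (τ ^ c j)).prod

lemma blockDiag_succ (c : ℕ → ℤ) (m : ℕ) :
    blockDiag d τ c (m + 1) = blockDiag d τ c m * shift (m * d) (τ ^ c m) := by
  simp [blockDiag, List.range_succ]

lemma blockDiag_mem {c : ℕ → ℤ} {m n : ℕ} (hm : m ≤ n) :
    blockDiag d τ c m ∈ blockDiagSubgroup d n τ := by
  induction m with
  | zero => exact one_mem _
  | succ m ih =>
    rw [blockDiag_succ, shift_zpow]
    exact mul_mem (ih (by omega))
      (Subgroup.subset_closure ⟨m, by omega, Subgroup.zpow_mem_zpowers _ _⟩)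

variable (hτ : τ ∈ fixingSubgroup (Perm ℕ) (Set.Ici d)) (c : ℕ → ℤ)
include hτ

lemma blockDiag_apply_of_le {m x : ℕ} (hx : m * d ≤ x) : blockDiag d τ c m x = x := by
  induction m with
  | zero => simp [blockDiag]
  | succ m ih =>
    rw [blockDiag_succ, Perm.mul_apply,
      shift_apply_eq_self (zpow_mem hτ _) (Or.inr (by rwa [← Nat.succ_mul])), ih (by nlinarith)]

lemma blockDiag_apply {m i k : ℕ} (hi : i < m) (hk : k < d) :
    blockDiag d τ c m (i * d + k) = i * d + (τ ^ c i) k := by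
  induction m with
  | zero => omega
  | succ m ih =>
    rw [blockDiag_succ, Perm.mul_apply]
    rcases Nat.lt_succ_iff_lt_or_eq.mp hi with hi | rfl
    · have := Nat.mul_add_self_le_mul_of_lt d hi
      rw [shift_apply_eq_self (zpow_mem hτ _) (Or.inl (by omega)), ih hi]
    · rw [shift_apply_add, blockDiag_apply_of_le hτ c le_self_add]

end BlockDiag

section Kernel

variable {d n : ℕ} {ς₁ τ : Perm ℕ} (hτ : τ ∈ fixingSubgroup (Perm ℕ) (Set.Ici d))
include hτ

lemma PermutesBlocks.exists_eq_blockDiag (hd : 0 < d) {g : Perm ℕ}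
    (hg : PermutesBlocks d n ς₁ τ g 1) : ∃ c, g = blockDiag d τ c n := by
  obtain ⟨hfix, z, hz⟩ := hg
  refine ⟨fun j => if h : j < n then z ⟨j, h⟩ else 0, Perm.ext fun x => ?_⟩
  rcases lt_or_ge x (n * d) with hx | hx
  · have hxn : x / d < n := (Nat.div_lt_iff_lt_mul hd).mpr hx
    rw [← Nat.div_add_mod' x d, blockDiag_apply hτ _ hxn (Nat.mod_lt x hd),
      hz ⟨x / d, hxn⟩ _ (Nat.mod_lt x hd)]
    simp [hxn]
  · rw [hfix x hx, blockDiag_apply_of_le hτ _ hx]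

lemma permutesBlocks_shift_zpow {k : ℕ} (hk : k < n) (m : ℤ) :
    PermutesBlocks d n ς₁ τ (shift (k * d) τ ^ m) 1 := by
  rw [← shift_zpow]
  have hkn := Nat.mul_add_self_le_mul_of_lt d hk
  refine ⟨fun x hx => shift_apply_eq_self (zpow_mem hτ m) (Or.inr (by omega)),
    fun i => if (i : ℕ) = k then m else 0, fun i j hj => ?_⟩
  rcases lt_trichotomy (i : ℕ) k with hik | hik | hik
  · have := Nat.mul_add_self_le_mul_of_lt d hik
    rw [shift_apply_eq_self (zpow_mem hτ m) (Or.inl (by omega))]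
    simp [hik.ne]
  · simp [hik, shift_apply_add]
  · have := Nat.mul_add_self_le_mul_of_lt d hik
    rw [shift_apply_eq_self (zpow_mem hτ m) (Or.inr (by nlinarith))]
    simp [hik.ne']

lemma permutesBlocks_one_iff_mem_blockDiagSubgroup (hd : 0 < d) (hc : Commute ς₁ τ)
    (h₁ : ς₁ ∈ fixingSubgroup (Perm ℕ) (Set.Ici d)) {g : Perm ℕ} :
    PermutesBlocks d n ς₁ τ g 1 ↔ g ∈ blockDiagSubgroup d n τ := by
  refine ⟨fun hg => ?_, fun hg => ?_⟩
  · obtain ⟨c, rfl⟩ := hg.exists_eq_blockDiag hτ hd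
    exact blockDiag_mem le_rfl
  · induction hg using Subgroup.closure_induction with
    | mem x hx =>
      obtain ⟨k, hk, m, rfl⟩ := hx
      exact permutesBlocks_shift_zpow hτ hk m
    | one => exact .one
    | mul x y _ _ hx hy => simpa using hx.mul h₁ hτ hc hy
    | inv x _ hx => simpa using hx.inv h₁ hτ hc

end Kernel

lemma theta_apply (d k : ℕ) :
    theta d k = if k < d then k + d else if k < 2 * d then k - d else k :=
  rfl

section Sigma

variable {d n : ℕ} {ς₁ ς₂ τ : Perm ℕ} (h₁ : ς₁ ∈ fixingSubgroup (Perm ℕ) (Set.Ici d))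
  (h₂ : ς₂ ∈ fixingSubgroup (Perm ℕ) (Set.Ici d))
include h₁

lemma theta_mul_shift_apply_of_lt {k : ℕ} (hk : k < d) :
    (theta d * ς₁ * shift d ς₂) k = ς₁ k + d := by
  have := apply_lt_of_mem_fixingSubgroup_Ici h₁ hk
  simp [theta_apply, shift_apply_of_lt d ς₂ hk, this]

include h₂

lemma theta_mul_shift_apply_add {k : ℕ} (hk : k < d) :
    (theta d * ς₁ * shift d ς₂) (d + k) = ς₂ k := by
  have := apply_lt_of_mem_fixingSubgroup_Ici h₂ hk
  simp [theta_apply, shift_apply_add, mem_fixingSubgroup_Ici.mp h₁ (d + ς₂ k) (by omega)]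
  omega

lemma theta_mul_shift_mem_fixingSubgroup :
    theta d * ς₁ * shift d ς₂ ∈ fixingSubgroup (Perm ℕ) (Set.Ici (2 * d)) := by
  refine mem_fixingSubgroup_Ici.mpr fun k hk => ?_
  obtain ⟨k, rfl⟩ := Nat.exists_eq_add_of_le (by omega : d ≤ k)
  simp [theta_apply, shift_apply_add, mem_fixingSubgroup_Ici.mp h₂ k (by omega),
    mem_fixingSubgroup_Ici.mp h₁ (d + k) (by omega)]
  omega

lemma permutesBlocks_shift_theta_mul_shift (hτ : ς₁ * ς₂ = τ) {r : ℕ} (hr : r + 1 < n) :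
    PermutesBlocks d n ς₁ τ (shift (r * d) (theta d * ς₁ * shift d ς₂))
      (swap ⟨r, by omega⟩ ⟨r + 1, hr⟩) := by
  have hfix := theta_mul_shift_mem_fixingSubgroup h₁ h₂
  refine ⟨fun k hk => shift_apply_eq_self hfix (Or.inr ?_),
    fun i => if (i : ℕ) = r + 1 then 1 else 0, fun i k hk => ?_⟩
  · nlinarith
  rcases lt_trichotomy (i : ℕ) r with hir | hir | hir
  · have := Nat.mul_add_self_le_mul_of_lt d hir
    rw [swap_apply_of_ne_of_ne (Fin.ne_of_val_ne hir.ne)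
      (Fin.ne_of_val_ne (show (i : ℕ) ≠ r + 1 by omega)),
      shift_apply_eq_self hfix (Or.inl (by omega))]
    simp [show (i : ℕ) ≠ r + 1 by omega]
  · rw [show i = ⟨r, by omega⟩ from Fin.ext hir, swap_apply_left]
    simp [shift_apply_add, theta_mul_shift_apply_of_lt h₁ hk]
    ring
  rcases (show r + 1 ≤ i from hir).eq_or_lt with hir | hir
  · rw [show i = ⟨r + 1, hr⟩ from Fin.ext hir.symm, swap_apply_right]
    have hblock : (r + 1) * d + k = r * d + (d + k) := by ring
    simp [hblock, shift_apply_add, theta_mul_shift_apply_add h₁ h₂ hk, ← hτ]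
  · have := Nat.mul_add_self_le_mul_of_lt d hir
    rw [swap_apply_of_ne_of_ne (Fin.ne_of_val_ne (show (i : ℕ) ≠ r by omega))
      (Fin.ne_of_val_ne hir.ne'), shift_apply_eq_self hfix (Or.inr (by nlinarith))]
    simp [hir.ne']

end Sigma

lemma Equiv.Perm.surjective_of_swap_mem_range {G : Type*} [Group G] {n : ℕ}
    (f : G →* Perm (Fin n))
    (h : ∀ r (hr : r + 1 < n), swap ⟨r, by omega⟩ ⟨r + 1, hr⟩ ∈ f.range) :
    Function.Surjective f := by
  rw [← MonoidHom.range_eq_top]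
  cases n with
  | zero => exact Subsingleton.elim _ _
  | succ m =>
    refine eq_top_iff.mpr fun x _ => ?_
    have hx : x ∈ Submonoid.closure (Set.range fun i : Fin m => swap i.castSucc i.succ) := by
      rw [mclosure_swap_castSucc_succ]
      trivial
    refine (Submonoid.closure_le (S := f.range.toSubmonoid)).mpr ?_ hx
    rintro _ ⟨i, rfl⟩
    exact h i (by omega)

/-- `Bₙ(σ)/Aₙ(σ)` is isomorphic to the symmetric group `Sₙ` via
`σ_s mod Aₙ(σ) ↦ (s, s+1)`.  This is stated via the first isomorphism theorem:
there is a surjective homomorphism `φ : Bₙ(σ) → Sₙ` with kernel `Aₙ(σ)` sending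
`σ_s` to the transposition `(s, s+1)`. -/
theorem stmt_14 (d n : ℕ) (hd : 2 ≤ d) (ς₁ ς₂ τ : Equiv.Perm ℕ)
    (h₁ : ∀ k, d ≤ k → ς₁ k = k) (h₂ : ∀ k, d ≤ k → ς₂ k = k)
    (hτ : ς₁ * ς₂ = τ) (hτ' : ς₂ * ς₁ = τ)
    (σ : Equiv.Perm ℕ) (hσ : σ = theta d * ς₁ * shift d ς₂)
    (σs : ℕ → Equiv.Perm ℕ) (hσs : ∀ s, σs s = shift ((s - 1) * d) σ)
    (B T A : Subgroup (Equiv.Perm ℕ))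
    (hB : B = Subgroup.closure {x | ∃ s, 1 ≤ s ∧ s ≤ n - 1 ∧ x = σs s})
    (hT : T = Subgroup.closure {x | ∃ k < n, x ∈ Subgroup.zpowers (shift (k * d) τ)})
    (hA : A = B ⊓ T) :
    ∃ φ : ↥B →* Equiv.Perm (Fin n),
      Function.Surjective φ ∧
      φ.ker = A.subgroupOf B ∧
      ∀ (s : ℕ) (h1 : 1 ≤ s) (h2 : s ≤ n - 1) (hmem : σs s ∈ B),
        φ ⟨σs s, hmem⟩ =
          Equiv.swap (⟨s - 1, by omega⟩ : Fin n) (⟨s, by omega⟩ : Fin n) := by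
  have hd : 0 < d := by omega
  have h₁ : ς₁ ∈ fixingSubgroup (Perm ℕ) (Set.Ici d) := mem_fixingSubgroup_Ici.mpr h₁
  have h₂ : ς₂ ∈ fixingSubgroup (Perm ℕ) (Set.Ici d) := mem_fixingSubgroup_Ici.mpr h₂
  have hτd : τ ∈ fixingSubgroup (Perm ℕ) (Set.Ici d) := hτ ▸ mul_mem h₁ h₂
  have hc : Commute ς₁ τ := hτ ▸ (Commute.refl ς₁).mul_right (hτ.trans hτ'.symm)
  have hgen : ∀ s (h1 : 1 ≤ s) (h2 : s ≤ n - 1),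
      PermutesBlocks d n ς₁ τ (σs s) (swap ⟨s - 1, by omega⟩ ⟨s, by omega⟩) := by
    intro s h1 h2
    obtain ⟨r, rfl⟩ := Nat.exists_eq_add_of_le' h1
    simpa [hσs, hσ] using permutesBlocks_shift_theta_mul_shift h₁ h₂ hτ (n := n) (by omega)
  have hB_le : B ≤ blockSubgroup n hc h₁ hτd := by
    rw [hB, Subgroup.closure_le]
    rintro _ ⟨s, h1, h2, rfl⟩
    exact ⟨_, hgen s h1 h2⟩
  let φ := (blockPermHom hd).comp (Subgroup.inclusion hB_le)
  have hφ : ∀ s (h1 : 1 ≤ s) (h2 : s ≤ n - 1) (hmem : σs s ∈ B),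
      φ ⟨σs s, hmem⟩ = swap ⟨s - 1, by omega⟩ ⟨s, by omega⟩ :=
    fun s h1 h2 _ => blockPermHom_eq hd (hgen s h1 h2)
  refine ⟨φ, surjective_of_swap_mem_range φ fun r hr => ?_, ?_, hφ⟩
  · have hmem : σs (r + 1) ∈ B := hB ▸ Subgroup.subset_closure ⟨r + 1, by omega, by omega, rfl⟩
    exact ⟨⟨σs (r + 1), hmem⟩, hφ (r + 1) (by omega) (by omega) hmem⟩
  · ext g
    rw [MonoidHom.mem_ker, hA, Subgroup.inf_subgroupOf_left, Subgroup.mem_subgroupOf, hT]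
    exact (blockPermHom_eq_one_iff hd _).trans
      (permutesBlocks_one_iff_mem_blockDiagSubgroup hτd hd hc h₁)
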